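/- Let β = (π_ℓ)_{ℓ=1}^L be a chainable architecture. Then there exist an integer p ≥ 1 and indices 0 = ℓ₀ < ℓ₁ < ⋯ < ℓ_p = L such that the architecture β' := (π_{ℓ_{k−1}+1} * ⋯ * π_{ℓ_k})_{k=1}^p is chainable and non-redundant, B^{β'} = B^β, and ‖β'‖₀ ≤ ‖β‖₀ (where any architecture of depth 1 is by convention non-redundant). -/

import Mathlib

/-- A *pattern* is a tuple `(a, b, c, d)` of (positive) natural numbers. -/
structure Pattern where
  a : ℕ
  b : ℕ
  c : ℕ
  d : ℕ

namespace Pattern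

/-- The entries of a pattern are positive integers. -/
def Pos (π : Pattern) : Prop := 0 < π.a ∧ 0 < π.b ∧ 0 < π.c ∧ 0 < π.d

/-- Number of rows `a*b*d` of a `π`-factor. -/
def rows (π : Pattern) : ℕ := π.a * π.b * π.d

/-- Number of columns `a*c*d` of a `π`-factor. -/
def cols (π : Pattern) : ℕ := π.a * π.c * π.d

/-- `r(π₁, π₂) = a₁c₁/a₂ (= b₂d₂/d₁)`. -/
def rk (π₁ π₂ : Pattern) : ℕ := π₁.a * π₁.c / π₂.a

/-- A pair of patterns is *chainable* if `a₁c₁/a₂ = b₂d₂/d₁` is a positive integer,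
`a₁ ∣ a₂` and `d₂ ∣ d₁`. -/
def Chainable (π₁ π₂ : Pattern) : Prop :=
  π₂.a ∣ π₁.a * π₁.c ∧ π₁.d ∣ π₂.b * π₂.d ∧
    π₁.a * π₁.c / π₂.a = π₂.b * π₂.d / π₁.d ∧
    0 < π₁.a * π₁.c / π₂.a ∧ π₁.a ∣ π₂.a ∧ π₂.d ∣ π₁.d

/-- `π₁ * π₂ := (a₁, b₁d₁/d₂, a₂c₂/a₁, d₂)`. -/
instance : Mul Pattern :=
  ⟨fun π₁ π₂ => ⟨π₁.a, π₁.b * π₁.d / π₂.d, π₂.a * π₂.c / π₁.a, π₂.d⟩⟩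

/-- `‖π‖₀ := a*b*c*d`. -/
def norm0 (π : Pattern) : ℕ := π.a * π.b * π.c * π.d

end Pattern

open scoped Kronecker

/-- The flattening equivalence `(Fin a × Fin b) × Fin d ≃ Fin (a*b*d)`. -/
def kron3Equiv (a b d : ℕ) : (Fin a × Fin b) × Fin d ≃ Fin (a * b * d) :=
  (finProdFinEquiv.prodCongr (Equiv.refl (Fin d))).trans finProdFinEquiv

/-- The support matrix `S_π = I_a ⊗ 1_{b×c} ⊗ I_d ∈ {0,1}^{abd × acd}`. -/
def Pattern.S (π : Pattern) : Matrix (Fin π.rows) (Fin π.cols) ℕ :=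
  Matrix.reindex (kron3Equiv π.a π.b π.d) (kron3Equiv π.a π.c π.d)
    ((1 : Matrix (Fin π.a) (Fin π.a) ℕ) ⊗ₖ
      (Matrix.of fun _ _ => (1 : ℕ) : Matrix (Fin π.b) (Fin π.c) ℕ) ⊗ₖ
      (1 : Matrix (Fin π.d) (Fin π.d) ℕ))

/-- The support matrix `S_π`, extended by zero to an `ℕ × ℕ`-indexed array. -/
def SpatN (π : Pattern) : ℕ → ℕ → ℕ := fun i j =>
  if h : i < π.rows ∧ j < π.cols then π.S ⟨i, h.1⟩ ⟨j, h.2⟩ else 0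

/-- `X` is (the extension by zero of) a `π`-factor: it vanishes outside the support of `S_π`. -/
def IsFactorN (π : Pattern) (X : ℕ → ℕ → ℂ) : Prop :=
  ∀ i j, SpatN π i j = 0 → X i j = 0

/-- Product of matrices encoded as finitely supported `ℕ × ℕ`-indexed arrays. -/
noncomputable def nmul (f g : ℕ → ℕ → ℂ) : ℕ → ℕ → ℂ := fun i j => ∑' k, f i k * g k j

/-- `nprod X k = X 0 * X 1 * ⋯ * X k`. -/
noncomputable def nprod (X : ℕ → ℕ → ℕ → ℂ) : ℕ → ℕ → ℕ → ℂ
  | 0 => X 0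
  | k + 1 => nmul (nprod X k) (X (k + 1))

/-- Frobenius norm. -/
noncomputable def nfrob (f : ℕ → ℕ → ℂ) : ℝ := Real.sqrt (∑' i, ∑' j, ‖f i j‖ ^ 2)

/-- `A` is (the extension by zero of) a matrix of size `m × n`. -/
def SuppIn (m n : ℕ) (A : ℕ → ℕ → ℂ) : Prop := ∀ i j, A i j ≠ 0 → i < m ∧ j < n

/-- The set `B^β` of butterfly matrices for the architecture `β = (π 0, …, π (L-1))`. -/
def Bset (π : ℕ → Pattern) (L : ℕ) : Set (ℕ → ℕ → ℂ) :=
  { M | ∃ X : ℕ → ℕ → ℕ → ℂ, (∀ ℓ < L, IsFactorN (π ℓ) (X ℓ)) ∧ M = nprod X (L - 1) }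

/-- Partial products of patterns: `pprod π q k = π q * π (q+1) * ⋯ * π (q+k)`. -/
def pprod (π : ℕ → Pattern) (q : ℕ) : ℕ → Pattern
  | 0 => π q
  | k + 1 => pprod π q k * π (q + k + 1)

/-- A chainable pair is *redundant* if `r(π₁,π₂) ≥ min (b₁, c₂)`. -/
def RedundantPair (π₁ π₂ : Pattern) : Prop := min π₁.b π₂.c ≤ Pattern.rk π₁ π₂

/-!
Merge redundant consecutive pairs one at a time, by strong induction on `L`. Merging a chainable
pair keeps the architecture chainable, and for a redundant pair it does not increase `‖·‖₀`. It
also preserves `B^β`: a product of a `π₁`-factor and a `π₂`-factor is always a `(π₁ * π₂)`-factor,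
and if `b₁ ≤ r` (resp. `c₂ ≤ r`), where `r = r(π₁, π₂)`, every `(π₁ * π₂)`-factor is such a
product, the left (resp. right) factor being a 0/1 matrix sending the `b₁` (resp. `c₂`) block
indices into the `r` inner ones.
The grouping found for the merged architecture is pulled back by skipping the merged index.
-/

namespace Nat

lemma add_mul_div_of_lt {x n y : ℕ} (h : x < n) : (x + n * y) / n = y := by
  rw [Nat.add_mul_div_left _ _ (by omega), Nat.div_eq_of_lt h, zero_add]

lemma add_mul_mod_of_lt {x n y : ℕ} (h : x < n) : (x + n * y) % n = x := by
  rw [Nat.add_mul_mod_self_left, Nat.mod_eq_of_lt h]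

lemma add_mul_lt_mul {x n y m : ℕ} (hx : x < n) (hy : y < m) : x + n * y < n * m := by
  nlinarith

end Nat

lemma kron3Equiv_val {a b d : ℕ} (x : (Fin a × Fin b) × Fin d) :
    (kron3Equiv a b d x : ℕ) = x.2 + d * (x.1.2 + b * x.1.1) := by
  simp [kron3Equiv, finProdFinEquiv_apply_val]

lemma Pattern.S_kron3Equiv (π : Pattern) (x : (Fin π.a × Fin π.b) × Fin π.d)
    (y : (Fin π.a × Fin π.c) × Fin π.d) :
    π.S (kron3Equiv _ _ _ x) (kron3Equiv _ _ _ y) = if x.1.1 = y.1.1 ∧ x.2 = y.2 then 1 else 0 := by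
  simp only [Pattern.S, Matrix.reindex_apply, Matrix.submatrix_apply, Equiv.symm_apply_apply,
    Matrix.kroneckerMap_apply, Matrix.one_apply, Matrix.of_apply]
  split_ifs <;> simp_all

lemma spatN_ne_zero_iff {π : Pattern} {i j : ℕ} :
    SpatN π i j ≠ 0 ↔
      i < π.rows ∧ j < π.cols ∧ i % π.d = j % π.d ∧ i / π.d / π.b = j / π.d / π.c := by
  unfold SpatN
  by_cases h : i < π.rows ∧ j < π.cols
  · rw [dif_pos h]
    obtain ⟨x, hx⟩ := (kron3Equiv π.a π.b π.d).surjective ⟨i, h.1⟩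
    obtain ⟨y, hy⟩ := (kron3Equiv π.a π.c π.d).surjective ⟨j, h.2⟩
    have hi : x.2 + π.d * (x.1.2 + π.b * x.1.1) = i := by rw [← kron3Equiv_val, hx]
    have hj : y.2 + π.d * (y.1.2 + π.c * y.1.1) = j := by rw [← kron3Equiv_val, hy]
    rw [show (⟨i, h.1⟩ : Fin π.rows) = kron3Equiv _ _ _ x from hx.symm,
      show (⟨j, h.2⟩ : Fin π.cols) = kron3Equiv _ _ _ y from hy.symm, Pattern.S_kron3Equiv,
      ← hi, ← hj, Nat.add_mul_mod_of_lt x.2.isLt, Nat.add_mul_mod_of_lt y.2.isLt,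
      Nat.add_mul_div_of_lt x.2.isLt, Nat.add_mul_div_of_lt y.2.isLt,
      Nat.add_mul_div_of_lt x.1.2.isLt, Nat.add_mul_div_of_lt y.1.2.isLt, hi, hj]
    simp [h, Fin.val_inj, and_comm]
  · rw [dif_neg h]
    tauto

namespace Pattern

lemma mul_def (π₁ π₂ : Pattern) :
    π₁ * π₂ = ⟨π₁.a, π₁.b * π₁.d / π₂.d, π₂.a * π₂.c / π₁.a, π₂.d⟩ := rfl

lemma mul_b_mul_d {π₁ π₂ : Pattern} (h : π₂.d ∣ π₁.d) :
    (π₁ * π₂).b * (π₁ * π₂).d = π₁.b * π₁.d :=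
  Nat.div_mul_cancel (dvd_mul_of_dvd_right h _)

lemma mul_a_mul_c {π₁ π₂ : Pattern} (h : π₁.a ∣ π₂.a) :
    (π₁ * π₂).a * (π₁ * π₂).c = π₂.a * π₂.c :=
  Nat.mul_div_cancel' (dvd_mul_of_dvd_left h _)

lemma mul_assoc_of_dvd {π₁ π₂ π₃ : Pattern} (h₁₂ : π₂.d ∣ π₁.d) (h₂₃ : π₂.a ∣ π₃.a) :
    π₁ * π₂ * π₃ = π₁ * (π₂ * π₃) := by
  rw [mul_def (π₁ * π₂), mul_def π₁ (π₂ * π₃), mul_b_mul_d h₁₂, mul_a_mul_c h₂₃]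
  rfl

namespace Chainable

variable {π₀ π₁ π₂ π₃ : Pattern}

lemma a_dvd (h : Chainable π₁ π₂) : π₁.a ∣ π₂.a := h.2.2.2.2.1

lemma d_dvd (h : Chainable π₁ π₂) : π₂.d ∣ π₁.d := h.2.2.2.2.2

lemma mul_right (h₀₁ : Chainable π₀ π₁) (h₁₂ : Chainable π₁ π₂) : Chainable π₀ (π₁ * π₂) := by
  obtain ⟨c₁, c₂, c₃, c₄, c₅, c₆⟩ := h₀₁
  rw [← mul_b_mul_d h₁₂.d_dvd] at c₂ c₃
  exact ⟨c₁, c₂, c₃, c₄, c₅, h₁₂.d_dvd.trans c₆⟩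

lemma mul_left (h₁₂ : Chainable π₁ π₂) (h₂₃ : Chainable π₂ π₃) : Chainable (π₁ * π₂) π₃ := by
  obtain ⟨c₁, c₂, c₃, c₄, c₅, c₆⟩ := h₂₃
  rw [← mul_a_mul_c h₁₂.a_dvd] at c₁ c₃ c₄
  exact ⟨c₁, c₂, c₃, c₄, h₁₂.a_dvd.trans c₅, c₆⟩

lemma norm0_mul_le (hc : Chainable π₁ π₂) (hred : RedundantPair π₁ π₂) :
    (π₁ * π₂).norm0 ≤ π₁.norm0 + π₂.norm0 := by
  have hnorm : (π₁ * π₂).norm0 = π₂.a * π₂.c * (π₁.b * π₁.d) := by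
    rw [← mul_a_mul_c hc.a_dvd, ← mul_b_mul_d hc.d_dvd, norm0]
    ring
  have hac : π₂.a * rk π₁ π₂ = π₁.a * π₁.c := Nat.mul_div_cancel' hc.1
  have hbd : π₁.d * rk π₁ π₂ = π₂.b * π₂.d := by
    rw [rk, hc.2.2.1]
    exact Nat.mul_div_cancel' hc.2.1
  rcases min_le_iff.mp hred with hb | hc'
  · calc (π₁ * π₂).norm0 ≤ π₂.a * π₂.c * (rk π₁ π₂ * π₁.d) := by rw [hnorm]; gcongr
      _ = π₂.norm0 := by rw [norm0, mul_comm _ π₁.d, hbd]; ring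
      _ ≤ π₁.norm0 + π₂.norm0 := Nat.le_add_left _ _
  · calc (π₁ * π₂).norm0 ≤ π₂.a * rk π₁ π₂ * (π₁.b * π₁.d) := by rw [hnorm]; gcongr
      _ = π₁.norm0 := by rw [norm0, hac]; ring
      _ ≤ π₁.norm0 + π₂.norm0 := Nat.le_add_right _ _

lemma exists_eq_mk (hc : Chainable π₁ π₂) :
    ∃ a b c d e f r : ℕ, 0 < a ∧ 0 < d ∧ 0 < e ∧
      π₁ = ⟨a, b, e * r, d * f⟩ ∧ π₂ = ⟨a * e, r * f, c, d⟩ := by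
  obtain ⟨a₁, b₁, c₁, d₁⟩ := π₁
  obtain ⟨a₂, b₂, c₂, d₂⟩ := π₂
  dsimp only [Chainable] at hc
  obtain ⟨hdvd₁, hdvd₂, heq, hr, ⟨e, rfl⟩, ⟨f, rfl⟩⟩ := hc
  set r := a₁ * c₁ / (a₁ * e)
  have ha : 0 < a₁ * e := Nat.pos_of_ne_zero fun h => by simp [r, h] at hr
  have hd : 0 < d₂ * f := Nat.pos_of_ne_zero fun h => by rw [h, Nat.div_zero] at heq; omega
  have hce : c₁ = e * r := by
    apply Nat.eq_of_mul_eq_mul_left (Nat.pos_of_mul_pos_right ha)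
    rw [← mul_assoc, Nat.mul_div_cancel' hdvd₁]
  have hbr : b₂ = r * f := by
    apply Nat.eq_of_mul_eq_mul_right (Nat.pos_of_mul_pos_right hd)
    rw [mul_assoc, mul_comm f, heq, Nat.div_mul_cancel hdvd₂]
  exact ⟨a₁, b₁, c₂, d₂, e, f, r, Nat.pos_of_mul_pos_right ha, Nat.pos_of_mul_pos_right hd,
    Nat.pos_of_mul_pos_left ha, by rw [hce], by rw [hbr]⟩

end Chainable

lemma mk_mul_mk {a b c d e f r : ℕ} (ha : 0 < a) (hd : 0 < d) :
    (⟨a, b, e * r, d * f⟩ : Pattern) * ⟨a * e, r * f, c, d⟩ = ⟨a, b * f, e * c, d⟩ := by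
  rw [mul_def]
  congr 1
  · rw [mul_left_comm, Nat.mul_div_cancel_left _ hd]
  · rw [mul_assoc, Nat.mul_div_cancel_left _ ha]

lemma rk_mk {a b c d e f r : ℕ} (ha : 0 < a) (he : 0 < e) :
    rk ⟨a, b, e * r, d * f⟩ ⟨a * e, r * f, c, d⟩ = r := by
  rw [rk, ← mul_assoc, Nat.mul_div_cancel_left _ (Nat.mul_pos ha he)]

end Pattern

lemma Nat.eq_digits (x d f r : ℕ) :
    x = x % d + d * (x / d % f + f * (x / d / f % r + r * (x / d / f / r))) := by
  rw [Nat.mod_add_div, Nat.mod_add_div, Nat.mod_add_div]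

lemma spatN_ne_zero_of_digits {π : Pattern} {α β γ δ : ℕ} (hα : α < π.a) (hβ : β < π.b)
    (hγ : γ < π.c) (hδ : δ < π.d) :
    SpatN π (δ + π.d * (β + π.b * α)) (δ + π.d * (γ + π.c * α)) ≠ 0 := by
  rw [spatN_ne_zero_iff, Pattern.rows, Pattern.cols]
  refine ⟨?_, ?_, ?_, ?_⟩
  · exact (Nat.add_mul_lt_mul hδ (Nat.add_mul_lt_mul hβ hα)).trans_eq (by ring)
  · exact (Nat.add_mul_lt_mul hδ (Nat.add_mul_lt_mul hγ hα)).trans_eq (by ring)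
  · rw [Nat.add_mul_mod_of_lt hδ, Nat.add_mul_mod_of_lt hδ]
  · rw [Nat.add_mul_div_of_lt hδ, Nat.add_mul_div_of_lt hδ, Nat.add_mul_div_of_lt hβ,
      Nat.add_mul_div_of_lt hγ]

lemma IsFactorN.suppIn {π : Pattern} {X : ℕ → ℕ → ℂ} (h : IsFactorN π X) :
    SuppIn π.rows π.cols X := fun i j hX =>
  have hS := spatN_ne_zero_iff.mp fun h0 => hX (h i j h0)
  ⟨hS.1, hS.2.1⟩

section NormalForm

/-! Throughout, `π₁ = (a, b, e r, d f)`, `π₂ = (a e, r f, c, d)` and `π₁ * π₂ = (a, b f, e c, d)`.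
Indices are written in mixed radix: a row `δ + d (δ' + f (β + b α))` of `π₁ * π₂`, a column
`δ + d (γ + c (ε + e α))`, and the inner indices `δ + d (δ' + f (ρ + r (ε + e α)))`, `ρ < r`. -/

variable {a b c d e f r : ℕ}

lemma spatN_mk_mul_ne_zero {i k j : ℕ} (h₁ : SpatN ⟨a, b, e * r, d * f⟩ i k ≠ 0)
    (h₂ : SpatN ⟨a * e, r * f, c, d⟩ k j ≠ 0) : SpatN ⟨a, b * f, e * c, d⟩ i j ≠ 0 := by
  simp only [spatN_ne_zero_iff, Pattern.rows, Pattern.cols] at *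
  obtain ⟨hi, -, hik, hik'⟩ := h₁
  obtain ⟨-, hj, hkj, hkj'⟩ := h₂
  refine ⟨hi.trans_eq (by ring), hj.trans_eq (by ring), ?_, ?_⟩
  · rw [← Nat.mod_mul_right_mod i d f, hik, Nat.mod_mul_right_mod, hkj]
  · simp only [Nat.div_div_eq_div_mul] at *
    calc i / (d * (b * f)) = i / (d * f * b) := by ring_nf
      _ = k / (d * f * (e * r)) := hik'
      _ = k / (d * (r * f) * e) := by ring_nf
      _ = j / (d * (e * c)) := by
        rw [← Nat.div_div_eq_div_mul, hkj', Nat.div_div_eq_div_mul]; ring_nf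

lemma exists_digits_of_spatN_mk_ne_zero {i j : ℕ} (h : SpatN ⟨a, b * f, e * c, d⟩ i j ≠ 0) :
    ∃ α < a, ∃ β < b, ∃ γ < c, ∃ δ < d, ∃ δ' < f, ∃ ε < e,
      i = δ + d * (δ' + f * (β + b * α)) ∧ j = δ + d * (γ + c * (ε + e * α)) := by
  simp only [spatN_ne_zero_iff, Pattern.rows, Pattern.cols] at h
  obtain ⟨hi, hj, hmod, hdiv⟩ := h
  have hd : 0 < d := Nat.pos_of_ne_zero (by rintro rfl; simp at hi)
  have hf : 0 < f := Nat.pos_of_ne_zero (by rintro rfl; simp at hi)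
  have hb : 0 < b := Nat.pos_of_ne_zero (by rintro rfl; simp at hi)
  have hc : 0 < c := Nat.pos_of_ne_zero (by rintro rfl; simp at hj)
  have he : 0 < e := Nat.pos_of_ne_zero (by rintro rfl; simp at hj)
  have hα : i / d / f / b < a := by
    simp only [Nat.div_div_eq_div_mul]
    exact (Nat.div_lt_iff_lt_mul (by positivity)).mpr (hi.trans_eq (by ring))
  have hαj : j / d / c / e = i / d / f / b := by
    simp only [Nat.div_div_eq_div_mul] at hdiv ⊢
    calc j / (d * c * e) = j / (d * (e * c)) := by ring_nf
      _ = i / (d * (b * f)) := hdiv.symm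
      _ = i / (d * f * b) := by ring_nf
  refine ⟨_, hα, _, Nat.mod_lt _ hb, j / d % c, Nat.mod_lt _ hc, _, Nat.mod_lt _ hd, _,
    Nat.mod_lt _ hf, j / d / c % e, Nat.mod_lt _ he, Nat.eq_digits i d f b, ?_⟩
  rw [← hαj, hmod, Nat.mod_add_div, Nat.mod_add_div, Nat.mod_add_div]

lemma nmul_mk_apply {X₁ X₂ : ℕ → ℕ → ℂ} (h₁ : IsFactorN ⟨a, b, e * r, d * f⟩ X₁)
    (h₂ : IsFactorN ⟨a * e, r * f, c, d⟩ X₂) {α β γ δ δ' ε : ℕ} (hγ : γ < c) (hδ : δ < d)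
    (hδ' : δ' < f) :
    nmul X₁ X₂ (δ + d * (δ' + f * (β + b * α))) (δ + d * (γ + c * (ε + e * α))) =
      ∑ ρ ∈ Finset.range r,
        X₁ (δ + d * (δ' + f * (β + b * α))) (δ + d * (δ' + f * (ρ + r * (ε + e * α)))) *
        X₂ (δ + d * (δ' + f * (ρ + r * (ε + e * α)))) (δ + d * (γ + c * (ε + e * α))) := by
  set i := δ + d * (δ' + f * (β + b * α))
  set j := δ + d * (γ + c * (ε + e * α))
  set K : ℕ → ℕ := fun ρ => δ + d * (δ' + f * (ρ + r * (ε + e * α))) with hK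
  have hKinj : Set.InjOn K (Finset.range r) := fun ρ hρ ρ' hρ' h => by
    have := congrArg (· / d / f % r) h
    simp only [hK, Nat.add_mul_div_of_lt hδ, Nat.add_mul_div_of_lt hδ'] at this
    rwa [Nat.add_mul_mod_of_lt (Finset.mem_range.mp hρ),
      Nat.add_mul_mod_of_lt (Finset.mem_range.mp hρ')] at this
  unfold nmul
  rw [tsum_eq_sum (s := (Finset.range r).image K), Finset.sum_image hKinj]
  intro k hk
  by_contra hne
  obtain ⟨hX₁, hX₂⟩ := mul_ne_zero_iff.mp hne
  obtain ⟨-, hk₁, hik, -⟩ := spatN_ne_zero_iff.mp fun h => hX₁ (h₁ _ _ h)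
  obtain ⟨-, -, hkj, hkj'⟩ := spatN_ne_zero_iff.mp fun h => hX₂ (h₂ _ _ h)
  dsimp only at hk₁ hik hkj hkj'
  have hr : 0 < r := Nat.pos_of_ne_zero (by rintro rfl; simp [Pattern.cols] at hk₁)
  have hkd : k % d = δ := by rw [hkj, Nat.add_mul_mod_of_lt hδ]
  have hkf : k / d % f = δ' := by
    rw [Nat.mod_mul, Nat.mod_mul, Nat.add_mul_mod_of_lt hδ, Nat.add_mul_div_of_lt hδ,
      Nat.add_mul_mod_of_lt hδ', hkd] at hik
    exact (Nat.eq_of_mul_eq_mul_left (by omega) (Nat.add_left_cancel hik)).symm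
  have hkr : k / d / f / r = ε + e * α := by
    rw [Nat.div_div_eq_div_mul _ f, mul_comm f, hkj', Nat.add_mul_div_of_lt hδ,
      Nat.add_mul_div_of_lt hγ]
  refine hk (Finset.mem_image.mpr ⟨k / d / f % r, Finset.mem_range.mpr (Nat.mod_lt _ hr), ?_⟩)
  rw [hK]
  dsimp only
  conv_rhs => rw [Nat.eq_digits k d f r, hkd, hkf, hkr]

lemma IsFactorN.nmul_mk {X₁ X₂ : ℕ → ℕ → ℂ} (h₁ : IsFactorN ⟨a, b, e * r, d * f⟩ X₁)
    (h₂ : IsFactorN ⟨a * e, r * f, c, d⟩ X₂) : IsFactorN ⟨a, b * f, e * c, d⟩ (nmul X₁ X₂) := by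
  intro i j hij
  have hterm : ∀ k, X₁ i k * X₂ k j = 0 := fun k => by
    by_contra hne
    obtain ⟨hX₁, hX₂⟩ := mul_ne_zero_iff.mp hne
    exact spatN_mk_mul_ne_zero (fun h => hX₁ (h₁ _ _ h)) (fun h => hX₂ (h₂ _ _ h)) hij
  simp [nmul, hterm]

lemma spatN_left_mk_ne_zero {α β ρ δ δ' ε : ℕ} (hα : α < a) (hβ : β < b) (hρ : ρ < r)
    (hε : ε < e) (hδ : δ < d) (hδ' : δ' < f) :
    SpatN ⟨a, b, e * r, d * f⟩ (δ + d * (δ' + f * (β + b * α)))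
      (δ + d * (δ' + f * (ρ + r * (ε + e * α)))) ≠ 0 := by
  have := spatN_ne_zero_of_digits (π := ⟨a, b, e * r, d * f⟩) hα hβ
    ((Nat.add_mul_lt_mul hρ hε).trans_eq (mul_comm r e)) (Nat.add_mul_lt_mul hδ hδ')
  convert this using 2 <;> ring

lemma spatN_right_mk_ne_zero {α γ ρ δ δ' ε : ℕ} (hα : α < a) (hγ : γ < c) (hρ : ρ < r)
    (hε : ε < e) (hδ : δ < d) (hδ' : δ' < f) :
    SpatN ⟨a * e, r * f, c, d⟩ (δ + d * (δ' + f * (ρ + r * (ε + e * α))))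
      (δ + d * (γ + c * (ε + e * α))) ≠ 0 := by
  have := spatN_ne_zero_of_digits (π := ⟨a * e, r * f, c, d⟩)
    ((Nat.add_mul_lt_mul hε hα).trans_eq (mul_comm e a))
    ((Nat.add_mul_lt_mul hδ' hρ).trans_eq (mul_comm f r)) hγ hδ
  convert this using 2; ring

/-- For `b ≤ r`: `X₁` copies the row digit `β` of `π₁` into the inner digit `ρ`, and `X₂` reads
`Z` on the row whose digit `β` is `ρ`. -/
lemma exists_nmul_eq_of_le_left {Z : ℕ → ℕ → ℂ} (hZ : IsFactorN ⟨a, b * f, e * c, d⟩ Z)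
    (hbr : b ≤ r) : ∃ X₁ X₂, IsFactorN ⟨a, b, e * r, d * f⟩ X₁ ∧
      IsFactorN ⟨a * e, r * f, c, d⟩ X₂ ∧ nmul X₁ X₂ = Z := by
  set X₁ : ℕ → ℕ → ℂ := fun i k =>
    if SpatN ⟨a, b, e * r, d * f⟩ i k ≠ 0 ∧ k / d / f % r = i / d / f % b then 1 else 0
  set X₂ : ℕ → ℕ → ℂ := fun k j =>
    if SpatN ⟨a * e, r * f, c, d⟩ k j ≠ 0 ∧ k / d / f % r < b then
      Z (k % d + d * (k / d % f + f * (k / d / f % r + b * (k / d / f / r / e)))) j else 0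
  have h₁ : IsFactorN ⟨a, b, e * r, d * f⟩ X₁ := fun i k h => if_neg fun hc => hc.1 h
  have h₂ : IsFactorN ⟨a * e, r * f, c, d⟩ X₂ := fun k j h => if_neg fun hc => hc.1 h
  refine ⟨X₁, X₂, h₁, h₂, funext₂ fun i j => ?_⟩
  by_cases hij : SpatN ⟨a, b * f, e * c, d⟩ i j = 0
  · rw [hZ i j hij, h₁.nmul_mk h₂ i j hij]
  obtain ⟨α, hα, β, hβ, γ, hγ, δ, hδ, δ', hδ', ε, hε, rfl, rfl⟩ :=
    exists_digits_of_spatN_mk_ne_zero hij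
  have hX₁ : ∀ ρ < r, X₁ (δ + d * (δ' + f * (β + b * α)))
      (δ + d * (δ' + f * (ρ + r * (ε + e * α)))) = if ρ = β then 1 else 0 := fun ρ hρ => by
    simp only [X₁, Nat.add_mul_div_of_lt hδ, Nat.add_mul_div_of_lt hδ', Nat.add_mul_mod_of_lt hρ,
      Nat.add_mul_mod_of_lt hβ]
    simp [spatN_left_mk_ne_zero hα hβ hρ hε hδ hδ']
  have hβr : β < r := hβ.trans_le hbr
  rw [nmul_mk_apply h₁ h₂ hγ hδ hδ', Finset.sum_eq_single_of_mem β (Finset.mem_range.mpr hβr)]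
  · simp only [hX₁ β hβr, X₂, Nat.add_mul_div_of_lt hδ, Nat.add_mul_div_of_lt hδ',
      Nat.add_mul_mod_of_lt hδ, Nat.add_mul_mod_of_lt hδ', Nat.add_mul_mod_of_lt hβr,
      Nat.add_mul_div_of_lt hβr, Nat.add_mul_div_of_lt hε]
    simp [hβ, spatN_right_mk_ne_zero hα hγ hβr hε hδ hδ']
  · intro ρ hρ hne
    rw [hX₁ ρ (Finset.mem_range.mp hρ), if_neg hne, zero_mul]

/-- For `c ≤ r`: `X₂` copies the inner digit `ρ` into the column digit `γ` of `π₂`, and `X₁`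
reads `Z` on the column whose digit `γ` is `ρ`. -/
lemma exists_nmul_eq_of_le_right {Z : ℕ → ℕ → ℂ} (hZ : IsFactorN ⟨a, b * f, e * c, d⟩ Z)
    (hcr : c ≤ r) : ∃ X₁ X₂, IsFactorN ⟨a, b, e * r, d * f⟩ X₁ ∧
      IsFactorN ⟨a * e, r * f, c, d⟩ X₂ ∧ nmul X₁ X₂ = Z := by
  set X₁ : ℕ → ℕ → ℂ := fun i k =>
    if SpatN ⟨a, b, e * r, d * f⟩ i k ≠ 0 ∧ k / d / f % r < c then
      Z i (k % d + d * (k / d / f % r + c * (k / d / f / r))) else 0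
  set X₂ : ℕ → ℕ → ℂ := fun k j =>
    if SpatN ⟨a * e, r * f, c, d⟩ k j ≠ 0 ∧ k / d / f % r = j / d % c then 1 else 0
  have h₁ : IsFactorN ⟨a, b, e * r, d * f⟩ X₁ := fun i k h => if_neg fun hc => hc.1 h
  have h₂ : IsFactorN ⟨a * e, r * f, c, d⟩ X₂ := fun k j h => if_neg fun hc => hc.1 h
  refine ⟨X₁, X₂, h₁, h₂, funext₂ fun i j => ?_⟩
  by_cases hij : SpatN ⟨a, b * f, e * c, d⟩ i j = 0
  · rw [hZ i j hij, h₁.nmul_mk h₂ i j hij]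
  obtain ⟨α, hα, β, hβ, γ, hγ, δ, hδ, δ', hδ', ε, hε, rfl, rfl⟩ :=
    exists_digits_of_spatN_mk_ne_zero hij
  have hX₂ : ∀ ρ < r, X₂ (δ + d * (δ' + f * (ρ + r * (ε + e * α))))
      (δ + d * (γ + c * (ε + e * α))) = if ρ = γ then 1 else 0 := fun ρ hρ => by
    simp only [X₂, Nat.add_mul_div_of_lt hδ, Nat.add_mul_div_of_lt hδ', Nat.add_mul_mod_of_lt hρ,
      Nat.add_mul_mod_of_lt hγ]
    simp [spatN_right_mk_ne_zero hα hγ hρ hε hδ hδ']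
  have hγr : γ < r := hγ.trans_le hcr
  rw [nmul_mk_apply h₁ h₂ hγ hδ hδ', Finset.sum_eq_single_of_mem γ (Finset.mem_range.mpr hγr)]
  · simp only [hX₂ γ hγr, X₁, Nat.add_mul_div_of_lt hδ, Nat.add_mul_div_of_lt hδ',
      Nat.add_mul_mod_of_lt hδ, Nat.add_mul_mod_of_lt hγr, Nat.add_mul_div_of_lt hγr]
    simp [hγ, spatN_left_mk_ne_zero hα hβ hγr hε hδ hδ']
  · intro ρ hρ hne
    rw [hX₂ ρ (Finset.mem_range.mp hρ), if_neg hne, mul_zero]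

end NormalForm

namespace Pattern.Chainable

variable {π₁ π₂ : Pattern} {X₁ X₂ Z : ℕ → ℕ → ℂ}

lemma isFactorN_nmul (hc : Chainable π₁ π₂) (h₁ : IsFactorN π₁ X₁) (h₂ : IsFactorN π₂ X₂) :
    IsFactorN (π₁ * π₂) (nmul X₁ X₂) := by
  obtain ⟨a, b, c, d, e, f, r, ha, hd, -, rfl, rfl⟩ := hc.exists_eq_mk
  rw [mk_mul_mk ha hd]
  exact h₁.nmul_mk h₂

lemma exists_nmul_eq (hc : Chainable π₁ π₂) (hred : RedundantPair π₁ π₂)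
    (hZ : IsFactorN (π₁ * π₂) Z) : ∃ X₁ X₂, IsFactorN π₁ X₁ ∧ IsFactorN π₂ X₂ ∧ nmul X₁ X₂ = Z := by
  obtain ⟨a, b, c, d, e, f, r, ha, hd, he, rfl, rfl⟩ := hc.exists_eq_mk
  rw [mk_mul_mk ha hd] at hZ
  rw [RedundantPair, rk_mk ha he] at hred
  rcases min_le_iff.mp hred with hbr | hcr
  · exact exists_nmul_eq_of_le_left hZ hbr
  · exact exists_nmul_eq_of_le_right hZ hcr

end Pattern.Chainable

lemma nmul_eq_sum_of_row {X Y : ℕ → ℕ → ℂ} {m : ℕ} (hY : ∀ k j, m ≤ k → Y k j = 0) (i j : ℕ) :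
    nmul X Y i j = ∑ k ∈ Finset.range m, X i k * Y k j :=
  tsum_eq_sum fun k hk => by rw [hY k j (by simpa using hk), mul_zero]

lemma nmul_eq_sum_of_col {X Y : ℕ → ℕ → ℂ} {n : ℕ} (hX : ∀ i k, n ≤ k → X i k = 0) (i j : ℕ) :
    nmul X Y i j = ∑ k ∈ Finset.range n, X i k * Y k j :=
  tsum_eq_sum fun k hk => by rw [hX i k (by simpa using hk), zero_mul]

lemma nmul_assoc {X Y W : ℕ → ℕ → ℂ} {m n : ℕ} (hY : SuppIn m n Y) :
    nmul (nmul X Y) W = nmul X (nmul Y W) := by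
  have hrow : ∀ k j, m ≤ k → Y k j = 0 := fun k j hk => by
    by_contra h
    exact absurd (hY k j h).1 (by omega)
  have hcol : ∀ k j, n ≤ j → Y k j = 0 := fun k j hj => by
    by_contra h
    exact absurd (hY k j h).2 (by omega)
  funext i j
  rw [nmul_eq_sum_of_col (n := n) fun i k hk => by simp [nmul_eq_sum_of_row hrow, hcol _ _ hk],
    nmul_eq_sum_of_row (m := m) fun k j hk => by simp [nmul_eq_sum_of_col hcol, hrow _ _ hk]]
  simp only [nmul_eq_sum_of_row hrow, nmul_eq_sum_of_col hcol, Finset.sum_mul, Finset.mul_sum]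
  rw [Finset.sum_comm]
  simp only [mul_assoc]

def mergeAt {α : Type*} (op : α → α → α) (x : ℕ → α) (ℓ : ℕ) : ℕ → α :=
  fun m => if m < ℓ then x m else if m = ℓ then op (x ℓ) (x (ℓ + 1)) else x (m + 1)

def splitAt {α : Type*} (y : ℕ → α) (ℓ : ℕ) (u v : α) : ℕ → α :=
  fun m => if m < ℓ then y m else if m = ℓ then u else if m = ℓ + 1 then v else y (m - 1)

section MergeAt

variable {α : Type*} (op : α → α → α) (x : ℕ → α) {ℓ m : ℕ}

lemma mergeAt_of_lt (h : m < ℓ) : mergeAt op x ℓ m = x m := if_pos h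

lemma mergeAt_self : mergeAt op x ℓ ℓ = op (x ℓ) (x (ℓ + 1)) := by simp [mergeAt]

lemma mergeAt_of_gt (h : ℓ < m) : mergeAt op x ℓ m = x (m + 1) := by
  simp [mergeAt, h.ne', h.not_gt]

lemma mergeAt_splitAt {y : ℕ → α} {u v : α} (h : op u v = y ℓ) :
    mergeAt op (splitAt y ℓ u v) ℓ = y := by
  funext m
  rcases lt_trichotomy m ℓ with hm | rfl | hm
  · simp [mergeAt, splitAt, hm]
  · simp [mergeAt, splitAt, h]
  · simp [mergeAt, splitAt, hm.ne', hm.not_gt, show ¬ m + 1 < ℓ by omega, show m + 1 ≠ ℓ by omega]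

end MergeAt

lemma nprod_congr {X X' : ℕ → ℕ → ℕ → ℂ} {t : ℕ} (h : ∀ s ≤ t, X s = X' s) :
    nprod X t = nprod X' t := by
  induction t with
  | zero => exact h 0 le_rfl
  | succ t ih => rw [nprod, nprod, ih fun s hs => h s (by omega), h (t + 1) le_rfl]

lemma nprod_mergeAt {X : ℕ → ℕ → ℕ → ℂ} {ℓ m n : ℕ} (hX : SuppIn m n (X ℓ)) {t : ℕ}
    (ht : ℓ ≤ t) : nprod (mergeAt nmul X ℓ) t = nprod X (t + 1) := by
  induction t, ht using Nat.le_induction with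
  | base =>
    cases ℓ with
    | zero => simp [nprod, mergeAt_self]
    | succ s =>
      rw [nprod, nprod_congr fun s' hs' => mergeAt_of_lt nmul X (by omega), mergeAt_self,
        ← nmul_assoc hX]
      rfl
  | succ t ht ih =>
    rw [nprod, ih, mergeAt_of_gt _ _ (by omega)]
    rfl

lemma bset_congr {π π' : ℕ → Pattern} {L : ℕ} (h : ∀ k < L, π k = π' k) :
    Bset π L = Bset π' L := by
  ext M
  exact exists_congr fun X => and_congr_left fun _ => forall₂_congr fun k hk => by rw [h k hk]

section Bset

variable {π : ℕ → Pattern} {L ℓ : ℕ}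

lemma isFactorN_mergeAt {X : ℕ → ℕ → ℕ → ℂ} (hX : ∀ m < L, IsFactorN (π m) (X m))
    (hc : Pattern.Chainable (π ℓ) (π (ℓ + 1))) :
    ∀ m < L - 1, IsFactorN (mergeAt (· * ·) π ℓ m) (mergeAt nmul X ℓ m) := by
  intro m hm
  rcases lt_trichotomy m ℓ with h | rfl | h
  · rw [mergeAt_of_lt _ _ h, mergeAt_of_lt _ _ h]
    exact hX m (by omega)
  · rw [mergeAt_self, mergeAt_self]
    exact hc.isFactorN_nmul (hX _ (by omega)) (hX _ (by omega))
  · rw [mergeAt_of_gt _ _ h, mergeAt_of_gt _ _ h]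
    exact hX _ (by omega)

lemma isFactorN_splitAt {Y : ℕ → ℕ → ℕ → ℂ} {U V : ℕ → ℕ → ℂ}
    (hℓ : ℓ + 1 < L) (hY : ∀ m < L - 1, IsFactorN (mergeAt (· * ·) π ℓ m) (Y m))
    (hU : IsFactorN (π ℓ) U) (hV : IsFactorN (π (ℓ + 1)) V) :
    ∀ m < L, IsFactorN (π m) (splitAt Y ℓ U V m) := by
  intro m hm
  by_cases h₁ : m < ℓ
  · simpa [splitAt, h₁, mergeAt_of_lt _ _ h₁] using hY m (by omega)
  by_cases h₂ : m = ℓ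
  · simpa [splitAt, h₂] using hU
  by_cases h₃ : m = ℓ + 1
  · simpa [splitAt, h₃] using hV
  have hY' := hY (m - 1) (by omega)
  rw [mergeAt_of_gt _ _ (by omega), Nat.sub_add_cancel (by omega)] at hY'
  simpa [splitAt, h₁, h₂, h₃] using hY'

lemma bset_mergeAt (hℓ : ℓ + 1 < L) (hc : Pattern.Chainable (π ℓ) (π (ℓ + 1)))
    (hred : RedundantPair (π ℓ) (π (ℓ + 1))) :
    Bset (mergeAt (· * ·) π ℓ) (L - 1) = Bset π L := by
  ext M
  constructor
  · rintro ⟨Y, hY, rfl⟩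
    have hYℓ := hY ℓ (by omega)
    rw [mergeAt_self] at hYℓ
    obtain ⟨U, V, hU, hV, hUV⟩ := hc.exists_nmul_eq hred hYℓ
    refine ⟨splitAt Y ℓ U V, isFactorN_splitAt hℓ hY hU hV, ?_⟩
    have hsplit : splitAt Y ℓ U V ℓ = U := by simp [splitAt]
    calc nprod Y (L - 1 - 1) = nprod (mergeAt nmul (splitAt Y ℓ U V) ℓ) (L - 1 - 1) := by
          rw [mergeAt_splitAt nmul hUV]
      _ = nprod (splitAt Y ℓ U V) (L - 1) := by
          rw [nprod_mergeAt (hsplit ▸ hU.suppIn) (by omega), Nat.sub_add_cancel (by omega)]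
  · rintro ⟨X, hX, rfl⟩
    refine ⟨mergeAt nmul X ℓ, isFactorN_mergeAt hX hc, ?_⟩
    rw [nprod_mergeAt (hX ℓ (by omega)).suppIn (by omega : ℓ ≤ L - 1 - 1),
      Nat.sub_add_cancel (by omega)]

end Bset

def ChainableArch (π : ℕ → Pattern) (L : ℕ) : Prop :=
  ∀ ℓ, ℓ + 1 < L → Pattern.Chainable (π ℓ) (π (ℓ + 1))

lemma ChainableArch.mergeAt {π : ℕ → Pattern} {L ℓ : ℕ} (h : ChainableArch π L)
    (hℓ : ℓ + 1 < L) : ChainableArch (mergeAt (· * ·) π ℓ) (L - 1) := by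
  intro m hm
  rcases lt_trichotomy (m + 1) ℓ with h₁ | rfl | h₁
  · rw [mergeAt_of_lt _ _ h₁, mergeAt_of_lt _ _ (by omega)]
    exact h m (by omega)
  · rw [mergeAt_of_lt _ _ (by omega), mergeAt_self]
    exact (h m (by omega)).mul_right (h (m + 1) (by omega))
  obtain rfl | h₂ := (show m = ℓ ∨ ℓ < m by omega)
  · rw [mergeAt_self, mergeAt_of_gt _ _ (by omega)]
    exact (h m (by omega)).mul_left (h (m + 1) (by omega))
  · rw [mergeAt_of_gt _ _ h₂, mergeAt_of_gt _ _ (by omega)]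
    exact h (m + 1) (by omega)

lemma pprod_d (π : ℕ → Pattern) (q n : ℕ) : (pprod π q n).d = (π (q + n)).d := by
  cases n <;> rfl

lemma pprod_congr {π π' : ℕ → Pattern} {q q' n : ℕ} (h : ∀ i ≤ n, π (q + i) = π' (q' + i)) :
    pprod π q n = pprod π' q' n := by
  induction n with
  | zero => exact h 0 le_rfl
  | succ n ih =>
    rw [pprod, pprod, ih fun i hi => h i (by omega)]
    exact congrArg _ (h (n + 1) le_rfl)

lemma pprod_mergeAt {π : ℕ → Pattern} {L ℓ q n : ℕ} (hπ : ChainableArch π L) (hqℓ : q ≤ ℓ)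
    (hℓn : ℓ ≤ q + n) (hL : q + n + 1 < L) :
    pprod (mergeAt (· * ·) π ℓ) q n = pprod π q (n + 1) := by
  induction n with
  | zero =>
    obtain rfl : ℓ = q := by omega
    rw [pprod, mergeAt_self]
    rfl
  | succ n ih =>
    rw [pprod]
    obtain h | rfl := (show ℓ ≤ q + n ∨ ℓ = q + n + 1 by omega)
    · rw [ih h (by omega), mergeAt_of_gt _ _ (by omega)]
      rfl
    · rw [pprod_congr (π' := π) (q' := q) fun i hi => mergeAt_of_lt _ _ (by omega), mergeAt_self,
        ← Pattern.mul_assoc_of_dvd (by rw [pprod_d]; exact (hπ _ (by omega)).d_dvd)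
          (hπ _ (by omega)).a_dvd]
      rfl

lemma sum_mergeAt_le {α : Type*} (op : α → α → α) (x : ℕ → α) (w : α → ℕ) {L ℓ : ℕ}
    (hℓ : ℓ + 1 < L) (h : w (op (x ℓ) (x (ℓ + 1))) ≤ w (x ℓ) + w (x (ℓ + 1))) :
    ∑ m ∈ Finset.range (L - 1), w (mergeAt op x ℓ m) ≤ ∑ m ∈ Finset.range L, w (x m) := by
  obtain ⟨t, rfl⟩ : ∃ t, L = ℓ + 2 + t := ⟨L - ℓ - 2, by omega⟩
  have hlow : ∑ m ∈ Finset.range ℓ, w (mergeAt op x ℓ m) = ∑ m ∈ Finset.range ℓ, w (x m) :=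
    Finset.sum_congr rfl fun m hm => by rw [mergeAt_of_lt _ _ (Finset.mem_range.mp hm)]
  have hhigh : ∑ i ∈ Finset.range t, w (mergeAt op x ℓ (ℓ + 1 + i)) =
      ∑ i ∈ Finset.range t, w (x (ℓ + 2 + i)) :=
    Finset.sum_congr rfl fun i _ => by rw [mergeAt_of_gt _ _ (by omega)]; ring_nf
  rw [show ℓ + 2 + t - 1 = ℓ + 1 + t by omega, Finset.sum_range_add _ (ℓ + 1),
    Finset.sum_range_add _ (ℓ + 2), Finset.sum_range_succ, Finset.sum_range_succ,
    Finset.sum_range_succ, hlow, hhigh, mergeAt_self]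
  omega

def groupedArch (π : ℕ → Pattern) (g : ℕ → ℕ) : ℕ → Pattern :=
  fun k => pprod π (g k) (g (k + 1) - 1 - g k)

lemma groupedArch_id (π : ℕ → Pattern) : groupedArch π id = π :=
  funext fun k => by simp [groupedArch, pprod]

def skipAbove (ℓ x : ℕ) : ℕ := if x ≤ ℓ then x else x + 1

lemma strictMono_skipAbove (ℓ : ℕ) : StrictMono (skipAbove ℓ) := fun x y h => by
  unfold skipAbove
  split_ifs <;> omega

lemma groupedArch_skipAbove {π : ℕ → Pattern} {L ℓ k : ℕ} {g : ℕ → ℕ} (hπ : ChainableArch π L)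
    (hg : g k < g (k + 1)) (hgL : g (k + 1) < L) :
    groupedArch π (skipAbove ℓ ∘ g) k = groupedArch (mergeAt (· * ·) π ℓ) g k := by
  simp only [groupedArch, Function.comp, skipAbove]
  by_cases h₁ : g (k + 1) ≤ ℓ
  · rw [if_pos (by omega), if_pos h₁]
    exact pprod_congr fun i hi => (mergeAt_of_lt _ _ (by omega)).symm
  by_cases h₂ : ℓ < g k
  · rw [if_neg (by omega), if_neg h₁,
      show g (k + 1) + 1 - 1 - (g k + 1) = g (k + 1) - 1 - g k by omega]
    exact pprod_congr fun i hi => by rw [mergeAt_of_gt _ _ (by omega)]; ring_nf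
  · rw [if_pos (by omega), if_neg h₁,
      show g (k + 1) + 1 - 1 - g k = g (k + 1) - 1 - g k + 1 by omega]
    exact (pprod_mergeAt hπ (by omega) (by omega) (by omega)).symm

/-- The conclusion of the theorem, for the grouping `0 = g 0 < g 1 < ⋯ < g p = L`. -/
def IsReducedGrouping (π : ℕ → Pattern) (L p : ℕ) (g : ℕ → ℕ) : Prop :=
  1 ≤ p ∧ g 0 = 0 ∧ g p = L ∧ (∀ k < p, g k < g (k + 1)) ∧
    (∀ k, k + 1 < p → Pattern.Chainable (groupedArch π g k) (groupedArch π g (k + 1)) ∧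
      ¬ RedundantPair (groupedArch π g k) (groupedArch π g (k + 1))) ∧
    Bset (groupedArch π g) p = Bset π L ∧
    ∑ k ∈ Finset.range p, (groupedArch π g k).norm0 ≤ ∑ ℓ ∈ Finset.range L, (π ℓ).norm0

lemma isReducedGrouping_id {π : ℕ → Pattern} {L : ℕ} (hL : 1 ≤ L) (hπ : ChainableArch π L)
    (hnr : ∀ ℓ, ℓ + 1 < L → ¬ RedundantPair (π ℓ) (π (ℓ + 1))) : IsReducedGrouping π L L id := by
  unfold IsReducedGrouping
  rw [groupedArch_id]
  exact ⟨hL, rfl, rfl, fun k _ => k.lt_succ_self, fun k hk => ⟨hπ k hk, hnr k hk⟩, rfl, le_rfl⟩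

lemma IsReducedGrouping.of_mergeAt {π : ℕ → Pattern} {L ℓ p : ℕ} {g : ℕ → ℕ}
    (hπ : ChainableArch π L) (hℓ : ℓ + 1 < L) (hred : RedundantPair (π ℓ) (π (ℓ + 1)))
    (h : IsReducedGrouping (mergeAt (· * ·) π ℓ) (L - 1) p g) :
    IsReducedGrouping π L p (skipAbove ℓ ∘ g) := by
  obtain ⟨hp, hg₀, hgp, hmono, hnr, hB, hsum⟩ := h
  have hgL : ∀ k < p, g (k + 1) < L := fun k hk => by
    have : g (k + 1) ≤ g p :=
      (strictMonoOn_Iic_of_lt_succ (ψ := g) (n := p) (by simpa using hmono)).monotoneOn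
        (Set.mem_Iic.mpr hk) (Set.mem_Iic.mpr le_rfl) hk
    omega
  have hgrp : ∀ k < p, groupedArch π (skipAbove ℓ ∘ g) k =
      groupedArch (mergeAt (· * ·) π ℓ) g k := fun k hk =>
    groupedArch_skipAbove hπ (hmono k hk) (hgL k hk)
  refine ⟨hp, by simp [skipAbove, hg₀],
    by rw [Function.comp_apply, hgp, skipAbove, if_neg (by omega)]; omega,
    fun k hk => strictMono_skipAbove ℓ (hmono k hk), fun k hk => ?_, ?_, ?_⟩
  · rw [hgrp k (by omega), hgrp (k + 1) hk]
    exact hnr k hk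
  · rw [bset_congr hgrp, hB, bset_mergeAt hℓ (hπ ℓ hℓ) hred]
  · calc ∑ k ∈ Finset.range p, (groupedArch π (skipAbove ℓ ∘ g) k).norm0
        = ∑ k ∈ Finset.range p, (groupedArch (mergeAt (· * ·) π ℓ) g k).norm0 :=
          Finset.sum_congr rfl fun k hk => by rw [hgrp k (Finset.mem_range.mp hk)]
      _ ≤ _ := hsum
      _ ≤ _ := sum_mergeAt_le _ _ _ hℓ ((hπ ℓ hℓ).norm0_mul_le hred)

theorem redundancy_removal_general (L : ℕ) (hL : 1 ≤ L) (π : ℕ → Pattern)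
    (hch : ∀ ℓ, ℓ + 1 < L → Pattern.Chainable (π ℓ) (π (ℓ + 1))) :
    ∃ (p : ℕ) (f : ℕ → ℕ), 1 ≤ p ∧ f 0 = 0 ∧ f p = L ∧ (∀ k < p, f k < f (k + 1)) ∧
      (∀ k, k + 1 < p →
        Pattern.Chainable (pprod π (f k) (f (k + 1) - 1 - f k))
          (pprod π (f (k + 1)) (f (k + 2) - 1 - f (k + 1))) ∧
        ¬ RedundantPair (pprod π (f k) (f (k + 1) - 1 - f k))
          (pprod π (f (k + 1)) (f (k + 2) - 1 - f (k + 1)))) ∧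
      Bset (fun k => pprod π (f k) (f (k + 1) - 1 - f k)) p = Bset π L ∧
      (∑ k ∈ Finset.range p, Pattern.norm0 (pprod π (f k) (f (k + 1) - 1 - f k))) ≤
        ∑ ℓ ∈ Finset.range L, Pattern.norm0 (π ℓ) := by
  induction L using Nat.strong_induction_on generalizing π with
  | _ L ih =>
  by_cases hred : ∃ ℓ, ℓ + 1 < L ∧ RedundantPair (π ℓ) (π (ℓ + 1))
  · obtain ⟨ℓ, hℓ, hred⟩ := hred
    obtain ⟨p, g, hg⟩ :=
      ih (L - 1) (by omega) (by omega) (mergeAt (· * ·) π ℓ) (ChainableArch.mergeAt hch hℓ)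
    exact ⟨p, skipAbove ℓ ∘ g, IsReducedGrouping.of_mergeAt hch hℓ hred hg⟩
  · simp only [not_exists, not_and] at hred
    exact ⟨L, id, isReducedGrouping_id hL hch hred⟩

/-- **Proposition (redundancy removal).** Every chainable architecture can be compressed,
by grouping consecutive patterns, into a chainable non-redundant architecture representing
the same set of butterfly matrices with at most the same number of parameters. -/
theorem redundancy_removal (L : ℕ) (hL : 1 ≤ L) (π : ℕ → Pattern)
    (hPos : ∀ ℓ < L, (π ℓ).Pos)
    (hch : ∀ ℓ, ℓ + 1 < L → Pattern.Chainable (π ℓ) (π (ℓ + 1))) :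
    ∃ (p : ℕ) (f : ℕ → ℕ), 1 ≤ p ∧ f 0 = 0 ∧ f p = L ∧ (∀ k < p, f k < f (k + 1)) ∧
      (∀ k, k + 1 < p →
        Pattern.Chainable (pprod π (f k) (f (k + 1) - 1 - f k))
          (pprod π (f (k + 1)) (f (k + 2) - 1 - f (k + 1))) ∧
        ¬ RedundantPair (pprod π (f k) (f (k + 1) - 1 - f k))
          (pprod π (f (k + 1)) (f (k + 2) - 1 - f (k + 1)))) ∧
      Bset (fun k => pprod π (f k) (f (k + 1) - 1 - f k)) p = Bset π L ∧
      (∑ k ∈ Finset.range p, Pattern.norm0 (pprod π (f k) (f (k + 1) - 1 - f k))) ≤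
        ∑ ℓ ∈ Finset.range L, Pattern.norm0 (π ℓ) :=
  redundancy_removal_general L hL π hch
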